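/- arXiv:1105.4643 — 4 statements merged into one kernel-verified Lean document; each statement's English description precedes it below -/
import Mathlib

section
/- Let a, b, c > 0 be side lengths of a hyperbolic triangle in which the angle opposite the side of length c equals 2π/3. Then 2c > 2b + a. -/
/-!
Adding the addition formulas for `cosh (b + a)` and `cosh (b - a)` with weights `3/4` and `1/4`
rewrites the law of cosines as `cosh c = 3/4 · cosh (b + a) + 1/4 · cosh (b - a)`. Strict
convexity of `cosh` bounds this convex combination strictly from below by `cosh` of the same
combination of the arguments, `cosh (b + a / 2)`, and `cosh` is strictly increasing in `|x|`.
-/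

open Real Set

theorem Real.strictConvexOn_cosh : StrictConvexOn ℝ univ cosh :=
  strictConvexOn_univ_of_deriv2_pos continuous_cosh fun x => by
    simpa only [Function.iterate_succ, Function.iterate_zero, Function.comp_apply, id,
      deriv_cosh, deriv_sinh] using cosh_pos x

theorem Real.cosh_mul_cosh_add_half_sinh_mul_sinh (a b : ℝ) :
    cosh a * cosh b + 1 / 2 * sinh a * sinh b = 3 / 4 * cosh (b + a) + 1 / 4 * cosh (b - a) := by
  rw [cosh_add, cosh_sub]
  ring

theorem Real.cosh_add_half_lt_cosh_mul_cosh_add_half_sinh_mul_sinh {a : ℝ} (ha : a ≠ 0)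
    (b : ℝ) :
    cosh (b + a / 2) < cosh a * cosh b + 1 / 2 * sinh a * sinh b := by
  have hne : b + a ≠ b - a := fun h => ha (by linarith)
  have hjensen := strictConvexOn_cosh.2 (mem_univ _) (mem_univ _) hne
    (by norm_num : (0 : ℝ) < 3 / 4) (by norm_num : (0 : ℝ) < 1 / 4) (by norm_num)
  rw [cosh_mul_cosh_add_half_sinh_mul_sinh,
    show b + a / 2 = 3 / 4 * (b + a) + 1 / 4 * (b - a) by ring]
  simpa only [smul_eq_mul] using hjensen

theorem hyperbolic_triangle_two_c_gt_general (a b c : ℝ) (ha : 0 < a) (hc : 0 < c)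
    (h : Real.cosh c = Real.cosh a * Real.cosh b + (1 / 2) * Real.sinh a * Real.sinh b) :
    2 * c > 2 * b + a := by
  have hcosh : cosh (b + a / 2) < cosh c :=
    h ▸ cosh_add_half_lt_cosh_mul_cosh_add_half_sinh_mul_sinh ha.ne' b
  have habs : |b + a / 2| < |c| := cosh_lt_cosh.mp hcosh
  rw [abs_of_pos hc] at habs
  linarith [le_abs_self (b + a / 2)]

/-- If `a`, `b`, `c > 0` are side lengths of a hyperbolic triangle in which the angle
opposite the side of length `c` equals `2π/3` (encoded by the hyperbolic law of cosines
`cosh c = cosh a * cosh b + (1/2) * sinh a * sinh b`), then `2c > 2b + a`. -/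
theorem hyperbolic_triangle_two_c_gt (a b c : ℝ) (ha : 0 < a) (hb : 0 < b) (hc : 0 < c)
    (h : Real.cosh c = Real.cosh a * Real.cosh b + (1 / 2) * Real.sinh a * Real.sinh b) :
    2 * c > 2 * b + a :=
  hyperbolic_triangle_two_c_gt_general a b c ha hc h
end

section
/- Let X be a finite metric graph (a finite graph with a positive length assigned to each edge), and let m, l₀ > 0. If X has an edge e of length less than l₀, then e is contained in a connected subgraph S such that: (1) every edge e' adjacent to S but not contained in S satisfies len(e')/len(S) > m, and (2) len(S) < l₀·(m+1)^(|S|-1), where |S| is the number of edges of S and len(S) is the sum of the lengths of the edges of S. -/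
/-- A finite metric graph: finite vertex and edge types, each edge has an unordered pair
of (possibly equal) endpoints, and each edge has a positive length. -/
structure MetricGraph where
  V : Type
  E : Type
  [fintV : Fintype V]
  [fintE : Fintype E]
  [decE : DecidableEq E]
  ends : E → Sym2 V
  len : E → ℝ
  len_pos : ∀ e, 0 < len e

namespace MetricGraph

variable (G : MetricGraph)

instance : Fintype G.E := G.fintE
instance : DecidableEq G.E := G.decE

/-- Two edges touch if they share a vertex. -/
def Touches (e e' : G.E) : Prop := ∃ v, v ∈ G.ends e ∧ v ∈ G.ends e'

/-- An edge is adjacent to a set of edges if it shares a vertex with one of them. -/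
def AdjTo (e : G.E) (S : Finset G.E) : Prop := ∃ e' ∈ S, G.Touches e e'

/-- A set of edges forms a connected subgraph: any two of its edges are joined by a
chain of pairwise touching edges lying in the set. -/
def ConnectedEdges (S : Finset G.E) : Prop :=
  ∀ e ∈ S, ∀ e' ∈ S,
    Relation.ReflTransGen (fun x y => x ∈ S ∧ y ∈ S ∧ G.Touches x y) e e'

/-- The length of a subgraph: the sum of the lengths of its edges. -/
def lenOf (S : Finset G.E) : ℝ := ∑ e ∈ S, G.len e

end MetricGraph

/-!
Among the connected subgraphs `S ∋ e` with `len S < l₀ (m+1)^(|S|-1)` (the edge `e` alone is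
one), take one with the most edges. An edge `e'` adjacent to `S` with `len e' ≤ m · len S`
could be adjoined: the result is still connected and has length at most `(m+1) · len S`,
so it satisfies the bound with one more edge, contradicting maximality.
-/

namespace MetricGraph

variable {G : MetricGraph}

theorem Touches.symm {a b : G.E} (h : G.Touches a b) : G.Touches b a :=
  let ⟨v, ha, hb⟩ := h
  ⟨v, hb, ha⟩

theorem lenOf_pos {S : Finset G.E} (hS : S.Nonempty) : 0 < G.lenOf S :=
  Finset.sum_pos (fun e _ => G.len_pos e) hS

theorem lenOf_singleton (e : G.E) : G.lenOf {e} = G.len e :=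
  Finset.sum_singleton _ _

theorem lenOf_insert {S : Finset G.E} {e : G.E} (he : e ∉ S) :
    G.lenOf (insert e S) = G.len e + G.lenOf S :=
  Finset.sum_insert he

theorem connectedEdges_singleton (e : G.E) : G.ConnectedEdges {e} := by
  intro a ha b hb
  rw [Finset.mem_singleton] at ha hb
  subst ha hb
  exact .refl

theorem ConnectedEdges.insert_of_adjTo {S : Finset G.E} (hS : G.ConnectedEdges S)
    {e : G.E} (he : G.AdjTo e S) : G.ConnectedEdges (insert e S) := by
  obtain ⟨f, hf, hef⟩ := he
  have lift : ∀ {a b}, Relation.ReflTransGen (fun x y => x ∈ S ∧ y ∈ S ∧ G.Touches x y) a b →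
      Relation.ReflTransGen
        (fun x y => x ∈ insert e S ∧ y ∈ insert e S ∧ G.Touches x y) a b :=
    fun h => Relation.ReflTransGen.mono (fun _ _ hxy => ⟨Finset.mem_insert_of_mem hxy.1,
      Finset.mem_insert_of_mem hxy.2.1, hxy.2.2⟩) _ _ h
  have hf' : f ∈ insert e S := Finset.mem_insert_of_mem hf
  intro a ha b hb
  rcases Finset.mem_insert.mp ha with rfl | haS
  · rcases Finset.mem_insert.mp hb with rfl | hbS
    · exact .refl
    · exact .head ⟨Finset.mem_insert_self _ _, hf', hef⟩ (lift (hS f hf b hbS))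
  · rcases Finset.mem_insert.mp hb with rfl | hbS
    · exact .tail (lift (hS a haS f hf)) ⟨hf', Finset.mem_insert_self _ _, hef.symm⟩
    · exact lift (hS a haS b hbS)

theorem lenOf_insert_lt_pow {m l₀ : ℝ} {S : Finset G.E} (hS : S.Nonempty)
    (hlen : G.lenOf S < l₀ * (m + 1) ^ (S.card - 1))
    {e : G.E} (he : e ∉ S) (hshort : G.len e ≤ m * G.lenOf S) :
    G.lenOf (insert e S) < l₀ * (m + 1) ^ ((insert e S).card - 1) := by
  have hS_pos := G.lenOf_pos hS
  have hm : 0 < m + 1 := by nlinarith [G.len_pos e]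
  have hcard : (insert e S).card - 1 = (S.card - 1) + 1 := by
    rw [Finset.card_insert_of_notMem he]
    have := hS.card_pos
    omega
  calc G.lenOf (insert e S) = G.len e + G.lenOf S := G.lenOf_insert he
    _ ≤ (m + 1) * G.lenOf S := by linarith
    _ < (m + 1) * (l₀ * (m + 1) ^ (S.card - 1)) := mul_lt_mul_of_pos_left hlen hm
    _ = l₀ * (m + 1) ^ ((insert e S).card - 1) := by rw [hcard, pow_succ]; ring

end MetricGraph

theorem small_subgraph_general (G : MetricGraph) (m l₀ : ℝ)
    (e : G.E) (he : G.len e < l₀) :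
    ∃ S : Finset G.E, e ∈ S ∧ G.ConnectedEdges S ∧
      (∀ e' : G.E, e' ∉ S → G.AdjTo e' S → G.len e' / G.lenOf S > m) ∧
      G.lenOf S < l₀ * (m + 1) ^ (S.card - 1) := by
  let good : Set (Finset G.E) :=
    {S | e ∈ S ∧ G.ConnectedEdges S ∧ G.lenOf S < l₀ * (m + 1) ^ (S.card - 1)}
  have singleton_good : {e} ∈ good :=
    ⟨Finset.mem_singleton_self e, G.connectedEdges_singleton e, by
      simpa [G.lenOf_singleton] using he⟩
  obtain ⟨S, ⟨heS, hconn, hlen⟩, hmax⟩ :=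
    good.exists_max_image Finset.card good.toFinite ⟨_, singleton_good⟩
  refine ⟨S, heS, hconn, fun e' he'S hadj => ?_, hlen⟩
  by_contra! hshort
  rw [div_le_iff₀ (G.lenOf_pos ⟨e, heS⟩)] at hshort
  have hbigger := hmax (insert e' S) ⟨Finset.mem_insert_of_mem heS, hconn.insert_of_adjTo hadj,
    G.lenOf_insert_lt_pow ⟨e, heS⟩ hlen he'S hshort⟩
  rw [Finset.card_insert_of_notMem he'S] at hbigger
  omega

/-- If a finite metric graph has an edge `e` of length less than `l₀`, then `e` is
contained in a connected subgraph `S` such that (1) every edge adjacent to `S` but not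
in `S` satisfies `len e' / len S > m`, and (2) `len S < l₀ * (m+1)^(|S|-1)`. -/
theorem small_subgraph (G : MetricGraph) (m l₀ : ℝ) (hm : 0 < m) (hl₀ : 0 < l₀)
    (e : G.E) (he : G.len e < l₀) :
    ∃ S : Finset G.E, e ∈ S ∧ G.ConnectedEdges S ∧
      (∀ e' : G.E, e' ∉ S → G.AdjTo e' S → G.len e' / G.lenOf S > m) ∧
      G.lenOf S < l₀ * (m + 1) ^ (S.card - 1) :=
  small_subgraph_general G m l₀ e he
end

section
/- Define Sh(c, φ) = 2c − 2b − a, where a and b are the unique positive reals such that there is a hyperbolic triangle with two sides of length b meeting the side of length a at angles 2π/3, and such that the triangle with sides a, b and included angle 2π/3 has third side c with the angle between the two sides of length c at the original vertex being φ (as in the shortening procedure). Then for fixed c > 0, Sh(c, φ) is a strictly decreasing function of φ on (0, 2π/3), and Sh(c, 2π/3) = 0. -/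
/-!
The law of sines makes `b` strictly increasing in `φ`. Moving along `t ↦ (a + 2t, b - t)` strictly
increases the third side opposite the angle `2π/3` (its derivative is `(3/2) sinh a cosh b > 0`),
so on the level curve of that side `2b + a` must grow together with `b`, and `Sh = 2c - (2b + a)`
decreases. At `φ = 2π/3` the law of sines gives `b = c`, and the law of cosines then forces `a = 0`.
-/

open Real Set

/-- `cosh` of the side opposite an angle `2π/3` enclosed by sides `a` and `b`, by the
hyperbolic law of cosines (`-cos (2π/3) = 1/2`). -/
noncomputable def coshThirdSide (a b : ℝ) : ℝ :=
  cosh a * cosh b + (1 / 2) * sinh a * sinh b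

lemma coshThirdSide_strictMonoOn_left {b : ℝ} (hb : 0 ≤ b) :
    StrictMonoOn (coshThirdSide · b) (Ici 0) := by
  intro a ha a' ha' h
  have hcosh : cosh a < cosh a' := by
    rw [cosh_lt_cosh, abs_of_nonneg ha, abs_of_nonneg ha']
    exact h
  have hsinh : sinh a < sinh a' := sinh_lt_sinh.2 h
  have hsinh_b : 0 ≤ sinh b := sinh_nonneg_iff.2 hb
  simp only [coshThirdSide]
  nlinarith [cosh_pos b]

lemma hasDerivAt_coshThirdSide_trade (a b t : ℝ) :
    HasDerivAt (fun t => coshThirdSide (a + 2 * t) (b - t))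
      ((3 / 2) * sinh (a + 2 * t) * cosh (b - t)) t := by
  have hleft : HasDerivAt (fun t : ℝ => a + 2 * t) 2 t := by
    simpa using ((hasDerivAt_id t).const_mul 2).const_add a
  have hright : HasDerivAt (fun t : ℝ => b - t) (-1) t := by
    simpa using (hasDerivAt_id t).const_sub b
  have h := (hleft.cosh.mul hright.cosh).add ((hleft.sinh.const_mul (1 / 2)).mul hright.sinh)
  exact h.congr_deriv (by ring)

lemma coshThirdSide_trade_strictMonoOn {a : ℝ} (ha : 0 ≤ a) (b : ℝ) :
    StrictMonoOn (fun t => coshThirdSide (a + 2 * t) (b - t)) (Ici 0) := by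
  apply strictMonoOn_of_deriv_pos (convex_Ici 0)
  · exact fun t _ => (hasDerivAt_coshThirdSide_trade a b t).continuousAt.continuousWithinAt
  · intro t ht
    rw [interior_Ici, mem_Ioi] at ht
    rw [(hasDerivAt_coshThirdSide_trade a b t).deriv]
    have : 0 < sinh (a + 2 * t) := sinh_pos_iff.2 (by linarith)
    positivity

lemma two_mul_add_lt_of_coshThirdSide_eq {a₁ a₂ b₁ b₂ : ℝ} (ha₂ : 0 ≤ a₂) (hb₁ : 0 ≤ b₁)
    (hb : b₁ < b₂) (h : coshThirdSide a₁ b₁ = coshThirdSide a₂ b₂) :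
    2 * b₁ + a₁ < 2 * b₂ + a₂ := by
  by_contra! hle
  have hδ : (0 : ℝ) < b₂ - b₁ := sub_pos.2 hb
  have := calc
    coshThirdSide a₂ b₂ = coshThirdSide (a₂ + 2 * 0) (b₂ - 0) := by simp
    _ < coshThirdSide (a₂ + 2 * (b₂ - b₁)) (b₂ - (b₂ - b₁)) :=
      coshThirdSide_trade_strictMonoOn ha₂ b₂ self_mem_Ici hδ.le hδ
    _ ≤ coshThirdSide a₁ b₁ := by
      rw [sub_sub_cancel]
      exact (coshThirdSide_strictMonoOn_left hb₁).monotoneOn (mem_Ici.2 (by linarith))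
        (mem_Ici.2 (by linarith)) (by linarith)
    _ = coshThirdSide a₂ b₂ := h
  exact lt_irrefl _ this

lemma eq_zero_of_coshThirdSide_eq_cosh {a c : ℝ} (ha : 0 ≤ a) (hc : 0 ≤ c)
    (h : coshThirdSide a c = cosh c) : a = 0 := by
  by_contra ha0
  have : coshThirdSide 0 c < coshThirdSide a c :=
    coshThirdSide_strictMonoOn_left hc self_mem_Ici ha (lt_of_le_of_ne ha (Ne.symm ha0))
  rw [h] at this
  simp [coshThirdSide] at this

lemma strictMonoOn_of_sin_half_mul_sinh_eq {c k : ℝ} {b : ℝ → ℝ} {s : Set ℝ}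
    (hs : s ⊆ Icc (-π) π) (hc : 0 < c) (hk : 0 < k)
    (h : ∀ φ ∈ s, sin (φ / 2) * sinh c = k * sinh (b φ)) : StrictMonoOn b s := by
  intro φ₁ h₁ φ₂ h₂ h12
  have hhalf : ∀ φ ∈ s, φ / 2 ∈ Icc (-(π / 2)) (π / 2) := fun φ hφ =>
    ⟨by linarith [(hs hφ).1], by linarith [(hs hφ).2]⟩
  have hsin : sin (φ₁ / 2) < sin (φ₂ / 2) :=
    strictMonoOn_sin (hhalf φ₁ h₁) (hhalf φ₂ h₂) (by linarith)
  have hsinh_c : 0 < sinh c := sinh_pos_iff.2 hc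
  rw [← sinh_lt_sinh, ← mul_lt_mul_iff_right₀ hk, ← h φ₁ h₁, ← h φ₂ h₂]
  exact mul_lt_mul_of_pos_right hsin hsinh_c

/-- The shortening procedure: two geodesic segments of length `c` meeting at angle `φ` are
replaced by a triod with legs of length `b` and bar of length `a`, all angles at the new
trivalent vertices being `2π/3`. The quantities `a = a(φ)`, `b = b(φ)` (for fixed `c`) are
determined by the hyperbolic law of cosines
`cosh c = cosh a * cosh b + (1/2) * sinh a * sinh b`
and the hyperbolic law of sines `sin (φ/2) * sinh c = sin (2π/3) * sinh b`.
The savings `Sh(c,φ) = 2c - 2b - a` is, for fixed `c > 0`, a strictly decreasing function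
of `φ` on `(0, 2π/3)`, and `Sh(c, 2π/3) = 0`. -/
theorem shortening_strictAnti_in_angle (c : ℝ) (hc : 0 < c) (a b : ℝ → ℝ)
    (ha : ∀ φ ∈ Set.Ioo 0 (2 * π / 3), 0 < a φ)
    (ha' : 0 ≤ a (2 * π / 3))
    (hb : ∀ φ ∈ Set.Ioc 0 (2 * π / 3), 0 < b φ)
    (hcos : ∀ φ ∈ Set.Ioc 0 (2 * π / 3),
      Real.cosh c = Real.cosh (a φ) * Real.cosh (b φ)
        + (1 / 2) * Real.sinh (a φ) * Real.sinh (b φ))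
    (hsin : ∀ φ ∈ Set.Ioc 0 (2 * π / 3),
      Real.sin (φ / 2) * Real.sinh c = Real.sin (2 * π / 3) * Real.sinh (b φ)) :
    StrictAntiOn (fun φ => 2 * c - 2 * b φ - a φ) (Set.Ioo 0 (2 * π / 3)) ∧
      2 * c - 2 * b (2 * π / 3) - a (2 * π / 3) = 0 := by
  have hsin_pos : 0 < sin (2 * π / 3) :=
    sin_pos_of_pos_of_lt_pi (by positivity) (by linarith [pi_pos])
  have hb_mono : StrictMonoOn b (Ioc 0 (2 * π / 3)) :=
    strictMonoOn_of_sin_half_mul_sinh_eq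
      (fun φ hφ => ⟨by linarith [hφ.1, pi_pos], by linarith [hφ.2, pi_pos]⟩) hc hsin_pos hsin
  have hend : 2 * π / 3 ∈ Ioc 0 (2 * π / 3) := right_mem_Ioc.2 (by positivity)
  refine ⟨fun φ₁ h₁ φ₂ h₂ h12 => ?_, ?_⟩
  · have := two_mul_add_lt_of_coshThirdSide_eq (ha φ₂ h₂).le (hb φ₁ (Ioo_subset_Ioc_self h₁)).le
      (hb_mono (Ioo_subset_Ioc_self h₁) (Ioo_subset_Ioc_self h₂) h12)
      ((hcos φ₁ (Ioo_subset_Ioc_self h₁)).symm.trans (hcos φ₂ (Ioo_subset_Ioc_self h₂)))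
    dsimp only
    linarith
  · have hbc : b (2 * π / 3) = c := by
      have h := hsin _ hend
      rw [show 2 * π / 3 / 2 = π - 2 * π / 3 by ring, sin_pi_sub] at h
      exact sinh_injective (mul_left_cancel₀ hsin_pos.ne' h).symm
    have ha0 : a (2 * π / 3) = 0 :=
      eq_zero_of_coshThirdSide_eq_cosh ha' hc.le (hbc ▸ (hcos _ hend).symm)
    rw [hbc, ha0]
    ring
end

section
/- With Sh(c, φ) = 2c − 2b(c,φ) − a(c,φ) as in the shortening procedure, for each fixed φ ∈ (0, 2π/3), Sh(c, φ) is a strictly increasing function of c > 0. -/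
/-!
The law of sines gives `sinh b = k sinh c` with `k = sin (φ/2) / sin (2π/3) < 1`. The law of
cosines is a quadratic equation in `eᵃ`, and its root with `a ≥ 0` is the projection formula
`eᵃ (cosh b + ½ sinh b) = cosh c + cos (φ/2) sinh c`. Hence `Sh = F_m c - F_{1/2} b` with
`F_t x = 2x - log (cosh x + t sinh x)` and `m = cos (φ/2)`, an explicit function of `c`.
With `u = sinh c`, `v = cosh c`, `w = cosh b`, positivity of its derivative becomes a polynomial
inequality with defect `(2-m)(vw - 1 - ku²) + (2m-1)u(w - kv) + (4 - 2m - 3k)/2`: the first two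
terms are nonnegative by Cauchy–Schwarz, `k ≤ 1` and `m ≥ 1/2`, and the last is positive since
`2m + 3k = 4 sin (φ/2 + π/6) < 4`.
-/

open Real Set

lemma cosh_add_mul_sinh_pos {t : ℝ} (ht : |t| ≤ 1) (x : ℝ) : 0 < cosh x + t * sinh x := by
  have h_sinh : |sinh x| < cosh x :=
    abs_lt.2 ⟨by linarith [cosh_add_sinh x ▸ exp_pos x], sinh_lt_cosh x⟩
  have h_mul : |t * sinh x| ≤ |sinh x| := by
    rw [abs_mul]
    exact mul_le_of_le_one_left (abs_nonneg _) ht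
  linarith [neg_abs_le (t * sinh x)]

lemma law_of_cosines_log_div {t b c r : ℝ} (ht : |t| ≤ 1)
    (hr : r ^ 2 = sinh c ^ 2 - (1 - t ^ 2) * sinh b ^ 2) (hpos : 0 < cosh c + r) :
    cosh (log ((cosh c + r) / (cosh b + t * sinh b))) * cosh b
      + t * sinh (log ((cosh c + r) / (cosh b + t * sinh b))) * sinh b = cosh c := by
  have hP := cosh_add_mul_sinh_pos ht b
  rw [cosh_log (div_pos hpos hP), sinh_log (div_pos hpos hP)]
  field_simp
  linear_combination (cosh b + t * sinh b) * (hr + cosh_sq b - cosh_sq c)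

lemma strictMonoOn_cosh_mul_cosh_add_mul_sinh_mul_sinh {t b : ℝ} (ht : 0 ≤ t) (hb : 0 ≤ b) :
    StrictMonoOn (fun x => cosh x * cosh b + t * sinh x * sinh b) (Ici 0) := by
  refine StrictMonoOn.add_monotone
    (fun x hx y hy h => mul_lt_mul_of_pos_right (cosh_strictMonoOn hx hy h) (cosh_pos b))
    fun x _ y _ h => ?_
  have := sinh_nonneg_iff.2 hb
  gcongr
  exact sinh_le_sinh.2 h

lemma eq_log_div_of_law_of_cosines {t a b c r : ℝ} (ht₀ : 0 ≤ t) (ht₁ : t ≤ 1) (ha : 0 ≤ a)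
    (hb : 0 ≤ b) (hr : r ^ 2 = sinh c ^ 2 - (1 - t ^ 2) * sinh b ^ 2)
    (hle : cosh b + t * sinh b ≤ cosh c + r)
    (hcos : cosh c = cosh a * cosh b + t * sinh a * sinh b) :
    a = log ((cosh c + r) / (cosh b + t * sinh b)) := by
  have ht : |t| ≤ 1 := abs_le.2 ⟨by linarith, ht₁⟩
  have hP := cosh_add_mul_sinh_pos ht b
  refine (strictMonoOn_cosh_mul_cosh_add_mul_sinh_mul_sinh ht₀ hb).injOn ha
    (log_nonneg ((one_le_div hP).2 hle)) ?_
  exact hcos.symm.trans (law_of_cosines_log_div ht hr (hP.trans_le hle)).symm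

noncomputable def savingsTerm (t x : ℝ) : ℝ := 2 * x - log (cosh x + t * sinh x)

lemma sub_sub_eq_savingsTerm_sub {k m a b c : ℝ} (hk₀ : 0 ≤ k) (hk₁ : k ≤ 1) (hm₀ : 0 ≤ m)
    (hkm : m ^ 2 = 1 - 3 / 4 * k ^ 2) (hc : 0 ≤ c) (ha : 0 ≤ a) (hsinh : sinh b = k * sinh c)
    (hcos : cosh c = cosh a * cosh b + 1 / 2 * sinh a * sinh b) :
    2 * c - 2 * b - a = savingsTerm m c - savingsTerm (1 / 2) b := by
  have hu : 0 ≤ sinh c := sinh_nonneg_iff.2 hc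
  have hbc : sinh b ≤ sinh c := by rw [hsinh]; exact mul_le_of_le_one_left hu hk₁
  have hb : 0 ≤ b := sinh_nonneg_iff.1 (hsinh ▸ mul_nonneg hk₀ hu)
  have hle : cosh b + 1 / 2 * sinh b ≤ cosh c + m * sinh c := by
    have hcosh : cosh b ≤ cosh c := cosh_le_cosh.2 (by
      rw [abs_of_nonneg hb, abs_of_nonneg hc]; exact sinh_le_sinh.1 hbc)
    nlinarith
  have hP := cosh_add_mul_sinh_pos (t := 1 / 2) (by norm_num [abs_of_pos]) b
  have h := eq_log_div_of_law_of_cosines (r := m * sinh c) (by norm_num) (by norm_num) ha hb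
    (by rw [hsinh]; linear_combination sinh c ^ 2 * hkm) hle hcos
  rw [log_div (hP.trans_le hle).ne' hP.ne'] at h
  rw [h, savingsTerm, savingsTerm]
  ring

lemma hasDerivAt_savingsTerm {t : ℝ} (ht : |t| ≤ 1) (x : ℝ) :
    HasDerivAt (savingsTerm t)
      (((2 - t) * cosh x + (2 * t - 1) * sinh x) / (cosh x + t * sinh x)) x := by
  have hpos := cosh_add_mul_sinh_pos ht x
  refine (((hasDerivAt_id x).const_mul 2).sub
    (((hasDerivAt_cosh x).add ((hasDerivAt_sinh x).const_mul t)).log hpos.ne')).congr_deriv ?_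
  simp only [Pi.add_apply]
  rw [eq_div_iff hpos.ne', sub_mul, div_mul_cancel₀ _ hpos.ne']
  ring

lemma hasDerivAt_arsinh_mul_sinh (k x : ℝ) :
    HasDerivAt (fun c => arsinh (k * sinh c)) (k * cosh x / cosh (arsinh (k * sinh x))) x := by
  rw [cosh_arsinh, div_eq_inv_mul]
  exact (hasDerivAt_arsinh _).comp x ((hasDerivAt_sinh x).const_mul k)

lemma savings_deriv_pos_inequality {k m u v w : ℝ} (hk₀ : 0 ≤ k) (hk₁ : k < 1) (hm₀ : 0 ≤ m)
    (hkm : m ^ 2 = 1 - 3 / 4 * k ^ 2) (hu : 0 ≤ u) (hv : 0 < v) (hw : 0 < w)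
    (huv : v ^ 2 = 1 + u ^ 2) (hkuw : w ^ 2 = 1 + (k * u) ^ 2) :
    3 / 2 * k * v * (v + m * u) < ((2 - m) * v + (2 * m - 1) * u) * (w + k * u / 2) := by
  have hkv : k * v ≤ w := by
    refine (pow_le_pow_iff_left₀ (by positivity) hw.le two_ne_zero).1 ?_
    rw [mul_pow, huv, hkuw]
    nlinarith [mul_le_one₀ hk₁.le hk₀ hk₁.le]
  have hvw : 1 + k * u ^ 2 ≤ v * w := by
    refine (pow_le_pow_iff_left₀ (by positivity) (by positivity) two_ne_zero).1 ?_
    nlinarith [sq_nonneg (u * (1 - k))]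
  have hm_half : 1 / 2 ≤ m := by nlinarith
  have hm_one : m ≤ 1 := by nlinarith
  have hgap : 2 * m + 3 * k < 4 := by nlinarith [sq_nonneg (k - 1)]
  have key : ((2 - m) * v + (2 * m - 1) * u) * (w + k * u / 2) - 3 / 2 * k * v * (v + m * u)
      = (2 - m) * (v * w - 1 - k * u ^ 2) + (2 * m - 1) * u * (w - k * v)
        + (4 - 2 * m - 3 * k) / 2 := by
    linear_combination (-3 / 2 * k) * huv
  nlinarith [mul_nonneg (by linarith : 0 ≤ 2 - m) (by linarith : 0 ≤ v * w - 1 - k * u ^ 2),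
    mul_nonneg (mul_nonneg (by linarith : 0 ≤ 2 * m - 1) hu) (by linarith : 0 ≤ w - k * v)]

theorem strictMonoOn_savings {k m : ℝ} (hk₀ : 0 ≤ k) (hk₁ : k < 1) (hm₀ : 0 ≤ m)
    (hkm : m ^ 2 = 1 - 3 / 4 * k ^ 2) :
    StrictMonoOn (fun c => savingsTerm m c - savingsTerm (1 / 2) (arsinh (k * sinh c)))
      (Ici 0) := by
  have hm : |m| ≤ 1 := abs_le.2 ⟨by linarith, by nlinarith⟩
  have hd (x : ℝ) : HasDerivAt
      (fun c => savingsTerm m c - savingsTerm (1 / 2) (arsinh (k * sinh c)))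
      (((2 - m) * cosh x + (2 * m - 1) * sinh x) / (cosh x + m * sinh x)
        - 3 / 2 * k * cosh x / (cosh (arsinh (k * sinh x)) + k * sinh x / 2)) x := by
    refine ((hasDerivAt_savingsTerm hm x).sub
      ((hasDerivAt_savingsTerm (t := 1 / 2) (by norm_num [abs_of_pos]) _).comp x
        (hasDerivAt_arsinh_mul_sinh k x))).congr_deriv ?_
    have := (cosh_pos (arsinh (k * sinh x))).ne'
    rw [sinh_arsinh]
    field_simp
    ring
  refine strictMonoOn_of_deriv_pos (convex_Ici 0)
    (fun x _ => (hd x).continuousAt.continuousWithinAt) fun x hx => ?_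
  rw [interior_Ici] at hx
  rw [(hd x).deriv, sub_pos]
  have hu : 0 ≤ sinh x := sinh_nonneg_iff.2 hx.le
  have hw : 0 < cosh (arsinh (k * sinh x)) := cosh_pos _
  have key := savings_deriv_pos_inequality hk₀ hk₁ hm₀ hkm hu (cosh_pos x) hw
    (by rw [cosh_sq']) (by rw [cosh_arsinh, sq_sqrt (by positivity)])
  rw [div_lt_div_iff₀ (by positivity) (cosh_add_mul_sinh_pos hm x)]
  linarith

lemma sin_div_sin_two_pi_div_three {β : ℝ} (hβ : β ∈ Ioo 0 (π / 3)) :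
    0 ≤ sin β / sin (2 * π / 3) ∧ sin β / sin (2 * π / 3) < 1 ∧ 0 ≤ cos β ∧
      cos β ^ 2 = 1 - 3 / 4 * (sin β / sin (2 * π / 3)) ^ 2 := by
  obtain ⟨hβ₀, hβ₁⟩ := hβ
  have hπ := pi_pos
  have h_sin : sin (2 * π / 3) = sin (π / 3) := by
    rw [show 2 * π / 3 = π - π / 3 by ring, sin_pi_sub]
  have h_pos : 0 < sin (π / 3) := sin_pos_of_pos_of_lt_pi (by positivity) (by linarith)
  rw [h_sin]
  refine ⟨div_nonneg (sin_nonneg_of_nonneg_of_le_pi hβ₀.le (by linarith)) h_pos.le,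
    (div_lt_one h_pos).2 (sin_lt_sin_of_lt_of_le_pi_div_two (by linarith) (by linarith) hβ₁),
    cos_nonneg_of_mem_Icc ⟨by linarith, by linarith⟩, ?_⟩
  rw [cos_sq', sin_pi_div_three, div_pow, div_pow, sq_sqrt (by norm_num)]
  field_simp
  ring

theorem shortening_strictMono_in_length_general (φ : ℝ) (hφ : φ ∈ Set.Ioo 0 (2 * π / 3))
    (a b : ℝ → ℝ)
    (ha : ∀ c ∈ Set.Ioi (0 : ℝ), 0 < a c)
    (hcos : ∀ c ∈ Set.Ioi (0 : ℝ),
      Real.cosh c = Real.cosh (a c) * Real.cosh (b c)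
        + (1 / 2) * Real.sinh (a c) * Real.sinh (b c))
    (hsin : ∀ c ∈ Set.Ioi (0 : ℝ),
      Real.sin (φ / 2) * Real.sinh c = Real.sin (2 * π / 3) * Real.sinh (b c)) :
    StrictMonoOn (fun c => 2 * c - 2 * b c - a c) (Set.Ioi 0) := by
  set k := sin (φ / 2) / sin (2 * π / 3)
  obtain ⟨hk₀, hk₁, hm₀, hkm⟩ :=
    sin_div_sin_two_pi_div_three ⟨half_pos hφ.1, by linarith [hφ.2]⟩
  refine ((strictMonoOn_savings hk₀ hk₁ hm₀ hkm).mono Ioi_subset_Ici_self).congr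
    fun c hc => ?_
  have hsinh : sinh (b c) = k * sinh c := by
    have h_pos : 0 < sin (2 * π / 3) :=
      sin_pos_of_pos_of_lt_pi (by positivity) (by linarith [pi_pos])
    rw [div_mul_eq_mul_div, eq_div_iff h_pos.ne', hsin c hc]
    ring
  have hb : b c = arsinh (k * sinh c) := by rw [← hsinh, arsinh_sinh]
  rw [sub_sub_eq_savingsTerm_sub hk₀ hk₁.le hm₀ hkm hc.le (ha c hc).le hsinh (hcos c hc), hb]

/-- With `Sh(c,φ) = 2c - 2 b(c,φ) - a(c,φ)` the savings of the shortening procedure,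
where `a` and `b` are determined (for fixed angle `φ ∈ (0, 2π/3)`) by the hyperbolic
law of cosines `cosh c = cosh a * cosh b + (1/2) * sinh a * sinh b` and the hyperbolic
law of sines `sin (φ/2) * sinh c = sin (2π/3) * sinh b`, the function `c ↦ Sh(c,φ)` is
strictly increasing on `(0, ∞)`. -/
theorem shortening_strictMono_in_length (φ : ℝ) (hφ : φ ∈ Set.Ioo 0 (2 * π / 3))
    (a b : ℝ → ℝ)
    (ha : ∀ c ∈ Set.Ioi (0 : ℝ), 0 < a c)
    (hb : ∀ c ∈ Set.Ioi (0 : ℝ), 0 < b c)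
    (hcos : ∀ c ∈ Set.Ioi (0 : ℝ),
      Real.cosh c = Real.cosh (a c) * Real.cosh (b c)
        + (1 / 2) * Real.sinh (a c) * Real.sinh (b c))
    (hsin : ∀ c ∈ Set.Ioi (0 : ℝ),
      Real.sin (φ / 2) * Real.sinh c = Real.sin (2 * π / 3) * Real.sinh (b c)) :
    StrictMonoOn (fun c => 2 * c - 2 * b c - a c) (Set.Ioi 0) :=
  shortening_strictMono_in_length_general φ hφ a b ha hcos hsin
end
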